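/- Corollary (Kelvin transform preserves α-harmonicity): let u be sufficiently regular on K and α-harmonic on an open set G ⊆ K \ {0} (i.e. (D^{α}u)(x) = 0 for all x ∈ G). Then the Kelvin transform (Ku)(x) = |x|^{α-1} u(1/x) is α-harmonic on the inverted set G* = {1/x : x ∈ G}. -/

import Mathlib

/-!
The substitution `y = w⁻¹` transforms Haar measure by `dμ(y) = ‖w‖⁻² dμ(w)`; this is checked on
balls, using that the Haar modulus of `ℚ_p` is the `p`-adic norm. Since
`‖z⁻¹ - w⁻¹‖ = ‖z - w‖ / (‖z‖ ‖w‖)`, it turns the integral defining `(D^α Ku)(z⁻¹)` into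
`‖z‖^(α+1) (D^α u)(z)` plus `u z` times `∫ k(z⁻¹ w) dw`, where
`k t = ‖1 - t‖^(-α-1) (‖t‖^(α-1) - 1)`. On `‖t‖ < 1` and on `‖t‖ > 1` the function `k` is, up to
sign, the pull-back of the other piece under the same substitution, so `∫ k = 0`.
-/

open MeasureTheory Metric Function
open scoped ENNReal NNReal Pointwise

lemma IsUltrametricDist.norm_eq_of_norm_sub_lt {S : Type*} [SeminormedAddGroup S]
    [IsUltrametricDist S] {x y : S} (h : ‖x - y‖ < ‖y‖) : ‖x‖ = ‖y‖ := by
  simpa [max_eq_right h.le] using IsUltrametricDist.norm_add_eq_max_of_norm_ne_norm h.ne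

lemma smul_sphere_zero {K : Type*} [NormedDivisionRing K] {a : K} (ha : a ≠ 0) (r : ℝ) :
    a • sphere (0 : K) r = sphere 0 (‖a‖ * r) := by
  ext y
  rw [Set.mem_smul_set_iff_inv_smul_mem₀ ha, mem_sphere_zero_iff_norm, mem_sphere_zero_iff_norm,
    smul_eq_mul, norm_mul, norm_inv, inv_mul_eq_iff_eq_mul₀ (norm_ne_zero_iff.mpr ha)]

lemma inv_preimage_sphere_zero {K : Type*} [NormedDivisionRing K] (r : ℝ) :
    Inv.inv ⁻¹' sphere (0 : K) r = sphere 0 r⁻¹ := by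
  ext y
  simp [inv_eq_iff_eq_inv]

/-- Holds without integrability of `f`: otherwise neither side is integrable and both
integrals are `0`. -/
lemma MeasureTheory.integral_add_eq_left_of_integral_eq_zero {X E : Type*} [MeasurableSpace X]
    {μ : Measure X} [NormedAddCommGroup E] [NormedSpace ℝ E] {f g : X → E}
    (hg : Integrable g μ) (hg0 : ∫ x, g x ∂μ = 0) : ∫ x, f x + g x ∂μ = ∫ x, f x ∂μ := by
  by_cases hf : Integrable f μ
  · rw [integral_add hf hg, hg0, add_zero]
  · rw [integral_undef hf, integral_undef ((integrable_add_iff_integrable_left' hg).not.mpr hf)]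

namespace Padic

variable {p : ℕ} [Fact p.Prime]

lemma one_lt_prime : (1 : ℝ) < p := by exact_mod_cast (Fact.out : p.Prime).one_lt

lemma prime_pos : (0 : ℝ) < p := zero_lt_one.trans one_lt_prime

lemma natCast_prime_ne_zero : (p : ℚ_[p]) ≠ 0 :=
  Nat.cast_ne_zero.mpr (Fact.out : p.Prime).ne_zero

lemma mem_closedBall_natCast_iff {x : ℤ_[p]} {j : ℕ} :
    (x : ℚ_[p]) ∈ closedBall (j : ℚ_[p]) (p : ℝ)⁻¹ ↔
      x - j ∈ IsLocalRing.maximalIdeal ℤ_[p] := by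
  rw [mem_closedBall, dist_eq_norm, IsLocalRing.mem_maximalIdeal, PadicInt.mem_nonunits,
    ← zpow_neg_one, norm_le_pow_iff_norm_lt_pow_add_one, neg_add_cancel, zpow_zero,
    PadicInt.norm_def]
  push_cast
  rfl

lemma closedBall_natCast_subset {j : ℕ} :
    closedBall (j : ℚ_[p]) (p : ℝ)⁻¹ ⊆ closedBall 0 1 := by
  intro y hy
  rw [mem_closedBall, dist_eq_norm] at hy
  rw [mem_closedBall_zero_iff, ← sub_add_cancel y j]
  exact (nonarchimedean _ _).trans <| max_le (hy.trans (inv_le_one_of_one_le₀ one_lt_prime.le))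
    (IsUltrametricDist.norm_natCast_le_one ℚ_[p] j)

lemma closedBall_zero_one_eq_iUnion :
    closedBall (0 : ℚ_[p]) 1 = ⋃ j : Fin p, closedBall (j : ℚ_[p]) (p : ℝ)⁻¹ := by
  refine subset_antisymm (fun y hy => ?_) (Set.iUnion_subset fun j => closedBall_natCast_subset)
  obtain ⟨y, rfl⟩ : ∃ x : ℤ_[p], (x : ℚ_[p]) = y := ⟨⟨y, mem_closedBall_zero_iff.mp hy⟩, rfl⟩
  obtain ⟨j, hjp, hj⟩ := PadicInt.exists_mem_range y
  exact Set.mem_iUnion.mpr ⟨⟨j, hjp⟩, mem_closedBall_natCast_iff.mpr hj⟩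

lemma pairwise_disjoint_closedBall_natCast :
    Pairwise (Disjoint on fun j : Fin p => closedBall (j : ℚ_[p]) (p : ℝ)⁻¹) := by
  intro j j' hne
  refine Set.disjoint_left.mpr fun y hy hy' => hne ?_
  obtain ⟨y, rfl⟩ : ∃ x : ℤ_[p], (x : ℚ_[p]) = y :=
    ⟨⟨y, mem_closedBall_zero_iff.mp (closedBall_natCast_subset hy)⟩, rfl⟩
  exact Fin.ext <| (PadicInt.existsUnique_mem_range y).unique
    ⟨j.2, mem_closedBall_natCast_iff.mp hy⟩ ⟨j'.2, mem_closedBall_natCast_iff.mp hy'⟩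

lemma isTopologicalBasis_closedBall_zpow :
    TopologicalSpace.IsTopologicalBasis
      {s : Set ℚ_[p] | ∃ (c : ℚ_[p]) (m : ℤ), s = closedBall c ((p : ℝ) ^ m)} := by
  refine TopologicalSpace.isTopologicalBasis_of_isOpen_of_nhds ?_ fun x U hx hU => ?_
  · rintro _ ⟨c, m, rfl⟩
    exact IsUltrametricDist.isOpen_closedBall c (zpow_pos prime_pos m).ne'
  obtain ⟨ε, hε, hball⟩ := Metric.isOpen_iff.mp hU x hx
  obtain ⟨n, hn⟩ := exists_pow_lt_of_lt_one hε (inv_lt_one_of_one_lt₀ (one_lt_prime (p := p)))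
  refine ⟨closedBall x ((p : ℝ) ^ (-(n : ℤ))), ⟨x, _, rfl⟩, mem_closedBall_self (by positivity),
    (closedBall_subset_ball ?_).trans hball⟩
  rwa [zpow_neg, zpow_natCast, ← inv_pow]

lemma closedBall_zero_zpow_eq_union (m : ℤ) :
    closedBall (0 : ℚ_[p]) ((p : ℝ) ^ m) = {0} ∪ ⋃ n : ℕ, sphere 0 ((p : ℝ) ^ (m - n)) := by
  ext y
  simp only [mem_closedBall_zero_iff, Set.mem_union, Set.mem_singleton_iff, Set.mem_iUnion,
    mem_sphere_zero_iff_norm]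
  refine ⟨fun hy => or_iff_not_imp_left.mpr fun hy0 => ?_, ?_⟩
  · rw [norm_eq_zpow_neg_valuation hy0] at hy ⊢
    have := (zpow_le_zpow_iff_right₀ one_lt_prime).mp hy
    exact ⟨(m + y.valuation).toNat, by congr 1; omega⟩
  · rintro (rfl | ⟨n, hn⟩)
    · simp [zpow_nonneg prime_pos.le]
    · exact hn.le.trans (zpow_le_zpow_right₀ one_lt_prime.le (by omega))

lemma closedBall_subset_sphere_zero_norm {c : ℚ_[p]} {r : ℝ} (hr : r < ‖c‖) :
    closedBall c r ⊆ sphere 0 ‖c‖ := fun _ hy =>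
  mem_sphere_zero_iff_norm.mpr <| IsUltrametricDist.norm_eq_of_norm_sub_lt <|
    (mem_closedBall_iff_norm.mp hy).trans_lt hr

lemma inv_preimage_sphere_zero_norm {a : ℚ_[p]} (ha : a ≠ 0) :
    Inv.inv ⁻¹' sphere (0 : ℚ_[p]) ‖a‖ = a⁻¹ ^ 2 • sphere 0 ‖a‖ := by
  have ha' : ‖a‖ ≠ 0 := norm_ne_zero_iff.mpr ha
  rw [inv_preimage_sphere_zero, smul_sphere_zero (by simpa using ha), norm_pow, norm_inv]
  congr 1
  field_simp

lemma inv_preimage_closedBall {c : ℚ_[p]} {r : ℝ} (hr : r < ‖c‖) :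
    Inv.inv ⁻¹' closedBall c r = c⁻¹ ^ 2 • closedBall c r := by
  rcases eq_or_ne c 0 with rfl | hc
  · simp [closedBall_eq_empty.mpr (by simpa using hr)]
  ext y
  rw [Set.mem_preimage, Set.mem_smul_set_iff_inv_smul_mem₀ (by simpa using hc), mem_closedBall,
    mem_closedBall, dist_eq_norm, dist_eq_norm, smul_eq_mul, inv_pow, inv_inv]
  rcases eq_or_ne y 0 with rfl | hy
  · simp
  have key : ‖c ^ 2 * y - c‖ = ‖c * y‖ * ‖y⁻¹ - c‖ := by
    rw [← norm_mul, ← norm_neg]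
    congr 1
    field_simp
    ring
  refine ⟨fun h => ?_, fun h => ?_⟩
  · have hcy : ‖c * y‖ = 1 := by
      rw [norm_mul, ← IsUltrametricDist.norm_eq_of_norm_sub_lt (h.trans_lt hr), norm_inv,
        inv_mul_cancel₀ (norm_ne_zero_iff.mpr hy)]
    rwa [key, hcy, one_mul]
  · have hcy : ‖c * y‖ = 1 := by
      have := IsUltrametricDist.norm_eq_of_norm_sub_lt (h.trans_lt hr)
      rw [pow_two, mul_assoc, norm_mul] at this
      exact (mul_eq_left₀ (norm_ne_zero_iff.mpr hc)).mp this
    rwa [key, hcy, one_mul] at h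

variable (p) in
noncomputable def primeUnit : ℚ_[p]ˣ := Units.mk0 p natCast_prime_ne_zero

lemma distribHaarChar_primeUnit : distribHaarChar ℚ_[p] (primeUnit p) = (p : ℝ≥0)⁻¹ := by
  borelize ℚ_[p]
  set μ : Measure ℚ_[p] := Measure.addHaar
  have hball : μ (closedBall 0 1) = p * μ (closedBall 0 (p : ℝ)⁻¹) := by
    rw [closedBall_zero_one_eq_iUnion, measure_iUnion pairwise_disjoint_closedBall_natCast
      fun _ => measurableSet_closedBall]
    simp [Measure.addHaar_closedBall_center μ]
  refine distribHaarChar_eq_of_measure_smul_eq_mul (s := closedBall 0 1)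
    (measure_closedBall_pos μ 0 one_pos).ne' measure_closedBall_lt_top.ne ?_
  have hp0 : (p : ℝ≥0∞) ≠ 0 := by simp [(Fact.out : p.Prime).ne_zero]
  rw [show primeUnit p • closedBall (0 : ℚ_[p]) 1 = closedBall 0 (p : ℝ)⁻¹ by
      simp [primeUnit, Units.smul_def, _root_.smul_closedBall],
    hball, ENNReal.coe_inv (by simpa using hp0), ← mul_assoc, ENNReal.coe_natCast,
    ENNReal.inv_mul_cancel hp0 (ENNReal.natCast_ne_top p), one_mul]

lemma distribHaarChar_of_norm_eq_one {a : ℚ_[p]ˣ} (ha : ‖(a : ℚ_[p])‖ = 1) :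
    distribHaarChar ℚ_[p] a = 1 := by
  borelize ℚ_[p]
  refine distribHaarChar_eq_of_measure_smul_eq_mul (μ := Measure.addHaar) (s := closedBall 0 1)
    (measure_closedBall_pos _ 0 one_pos).ne' measure_closedBall_lt_top.ne ?_
  simp [Units.smul_def, _root_.smul_closedBall, ha]

lemma distribHaarChar_eq_nnnorm (a : ℚ_[p]ˣ) : distribHaarChar ℚ_[p] a = ‖(a : ℚ_[p])‖₊ := by
  set v := (a : ℚ_[p]).valuation
  have hnorm : ‖(a : ℚ_[p])‖ = (p : ℝ)⁻¹ ^ v := by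
    rw [norm_eq_zpow_neg_valuation a.ne_zero, zpow_neg, inv_zpow]
  have hunit : ‖((a * primeUnit p ^ (-v) : ℚ_[p]ˣ) : ℚ_[p])‖ = 1 := by
    simp [primeUnit, hnorm, zpow_ne_zero v prime_pos.ne']
  have hdecomp : a = (a * primeUnit p ^ (-v)) * primeUnit p ^ v := by group
  conv_lhs => rw [hdecomp, map_mul, map_zpow, distribHaarChar_of_norm_eq_one hunit,
    distribHaarChar_primeUnit, one_mul]
  ext
  simp [hnorm]

variable (p) in
noncomputable def kelvinCorrection (α : ℝ) (t : ℚ_[p]) : ℝ :=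
  (‖1 - t‖ ^ (α + 1))⁻¹ * (‖t‖ ^ (α - 1) - 1)

lemma kelvinCorrection_eq {α : ℝ} {t : ℚ_[p]} (ht : t ≠ 0) :
    kelvinCorrection p α t = (ball 0 1).indicator (fun s => ‖s‖ ^ (α - 1) - 1) t -
      (‖t‖ ^ 2)⁻¹ * (ball 0 1).indicator (fun s => ‖s‖ ^ (α - 1) - 1) t⁻¹ := by
  have ht' : 0 < ‖t‖ := norm_pos_iff.mpr ht
  rcases lt_trichotomy ‖t‖ 1 with hlt | heq | hgt
  · have h1 : ‖1 - t‖ = ‖(1 : ℚ_[p])‖ :=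
      IsUltrametricDist.norm_eq_of_norm_sub_lt (by simpa using hlt)
    rw [norm_one] at h1
    rw [Set.indicator_of_mem (mem_ball_zero_iff.mpr hlt), Set.indicator_of_notMem
      (by simpa using ((one_lt_inv₀ ht').mpr hlt).le), kelvinCorrection, h1]
    simp
  · rw [Set.indicator_of_notMem (by simp [heq]), Set.indicator_of_notMem (by simp [heq]),
      kelvinCorrection, heq]
    simp
  · have h1 : ‖1 - t‖ = ‖t‖ := by
      simpa using IsUltrametricDist.norm_eq_of_norm_sub_lt (x := 1 - t) (y := -t)
        (by simpa using hgt)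
    rw [Set.indicator_of_notMem (by simpa using hgt.le), Set.indicator_of_mem
      (by simpa using inv_lt_one_of_one_lt₀ hgt), kelvinCorrection, h1, norm_inv,
      Real.inv_rpow ht'.le, Real.rpow_add ht', Real.rpow_sub ht', Real.rpow_one]
    field_simp
    ring

lemma kelvin_integrand_comp_inv {E : Type*} [NormedAddCommGroup E] [NormedSpace ℝ E] {α : ℝ}
    {u Ku : ℚ_[p] → E} (hKu : ∀ y ≠ 0, Ku y = ‖y‖ ^ (α - 1) • u y⁻¹) {z w : ℚ_[p]}
    (hz : z ≠ 0) (hw : w ≠ 0) :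
    (‖w‖ ^ 2)⁻¹ • (‖z⁻¹ - w⁻¹‖ ^ (α + 1))⁻¹ • (Ku z⁻¹ - Ku w⁻¹) =
      ‖z‖ ^ (α + 1) • (‖z - w‖ ^ (α + 1))⁻¹ • (u z - u w) +
        kelvinCorrection p α (z⁻¹ * w) • u z := by
  have ha : 0 < ‖z‖ := norm_pos_iff.mpr hz
  have hb : 0 < ‖w‖ := norm_pos_iff.mpr hw
  have h1 : ‖z⁻¹ - w⁻¹‖ = ‖z‖⁻¹ * ‖w‖⁻¹ * ‖z - w‖ := by
    rw [← norm_inv, ← norm_inv, ← norm_mul, ← norm_mul, ← norm_neg]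
    congr 1
    field_simp
    ring
  have h2 : ‖1 - z⁻¹ * w‖ = ‖z‖⁻¹ * ‖z - w‖ := by
    rw [← norm_inv, ← norm_mul, mul_sub, inv_mul_cancel₀ hz]
  rw [hKu _ (inv_ne_zero hz), hKu _ (inv_ne_zero hw), inv_inv, inv_inv, kelvinCorrection, h1, h2,
    norm_mul, norm_inv, norm_inv]
  simp (disch := positivity) only [Real.mul_rpow, Real.inv_rpow, Real.rpow_add ha,
    Real.rpow_add hb, Real.rpow_sub ha, Real.rpow_sub hb, Real.rpow_one]
  match_scalars <;> field_simp
  ring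

section Measure

variable [MeasurableSpace ℚ_[p]] [BorelSpace ℚ_[p]]

lemma ext_of_closedBall_zpow {ν₁ ν₂ : Measure ℚ_[p]}
    (hfin : ∀ (c : ℚ_[p]) (m : ℤ), ν₁ (closedBall c ((p : ℝ) ^ m)) ≠ ∞)
    (h : ∀ (c : ℚ_[p]) (m : ℤ),
      ν₁ (closedBall c ((p : ℝ) ^ m)) = ν₂ (closedBall c ((p : ℝ) ^ m))) :
    ν₁ = ν₂ := by
  refine Measure.ext_of_generateFrom_of_iUnion _ (fun n : ℕ => closedBall 0 ((p : ℝ) ^ (n : ℤ)))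
    (BorelSpace.measurable_eq.trans isTopologicalBasis_closedBall_zpow.borel_eq_generateFrom)
    ?_ ?_ (fun n => ⟨0, n, rfl⟩) (fun n => hfin 0 n) ?_
  · rintro _ ⟨c, m, rfl⟩ _ ⟨c', m', rfl⟩ hne
    rcases IsUltrametricDist.closedBall_subset_trichotomy c c' ((p : ℝ) ^ m) ((p : ℝ) ^ m') with
      h | h | h
    · exact ⟨c, m, Set.inter_eq_left.mpr h⟩
    · exact ⟨c', m', Set.inter_eq_right.mpr h⟩
    · exact absurd h.inter_eq (Set.nonempty_iff_ne_empty.mp hne)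
  · refine Set.eq_univ_of_forall fun y => Set.mem_iUnion.mpr ?_
    obtain ⟨n, hn⟩ := pow_unbounded_of_one_lt ‖y‖ (one_lt_prime (p := p))
    exact ⟨n, mem_closedBall_zero_iff.mpr (by simpa using hn.le)⟩
  · rintro _ ⟨c, m, rfl⟩
    exact h c m

lemma measure_closedBall_zero_zpow (ν : Measure ℚ_[p]) (m : ℤ) :
    ν (closedBall 0 ((p : ℝ) ^ m)) = ν {0} + ∑' n : ℕ, ν (sphere 0 ((p : ℝ) ^ (m - n))) := by
  have hdisj : Pairwise (Disjoint on fun n : ℕ => sphere (0 : ℚ_[p]) ((p : ℝ) ^ (m - n))) := by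
    intro n n' hne
    refine Set.disjoint_left.mpr fun y hy hy' => hne ?_
    rw [mem_sphere_zero_iff_norm] at hy hy'
    have := zpow_right_injective₀ prime_pos one_lt_prime.ne' (hy.symm.trans hy')
    omega
  rw [closedBall_zero_zpow_eq_union, measure_union (Set.disjoint_iUnion_right.mpr fun n => ?_)
    (MeasurableSet.iUnion fun _ => isClosed_sphere.measurableSet),
    measure_iUnion hdisj fun _ => isClosed_sphere.measurableSet]
  simp [(zpow_pos prime_pos _).ne]

variable (μ : Measure ℚ_[p]) [μ.IsAddHaarMeasure]

lemma addHaar_smul_set {a : ℚ_[p]} (ha : a ≠ 0) (s : Set ℚ_[p]) : μ (a • s) = ‖a‖ₑ * μ s := by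
  simpa [distribHaarChar_eq_nnnorm, Units.smul_def, enorm_eq_nnnorm] using
    (distribHaarChar_mul μ (Units.mk0 a ha) s).symm

lemma map_mul_left_eq_smul {a : ℚ_[p]} (ha : a ≠ 0) : μ.map (a * ·) = ‖a‖ₑ⁻¹ • μ := by
  ext s hs
  rw [Measure.map_apply (measurable_const_mul a) hs, Measure.smul_apply, smul_eq_mul,
    ← enorm_inv ha, ← addHaar_smul_set μ (inv_ne_zero ha),
    ← Set.preimage_smul_inv₀ (inv_ne_zero ha), inv_inv]
  rfl

lemma addHaar_sphere_zpow (j : ℤ) :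
    μ (sphere 0 ((p : ℝ) ^ j)) = ENNReal.ofReal ((p : ℝ) ^ j) * μ (sphere 0 1) := by
  have hpow : (p : ℚ_[p]) ^ (-j) ≠ 0 := zpow_ne_zero _ natCast_prime_ne_zero
  have hsphere : sphere (0 : ℚ_[p]) ((p : ℝ) ^ j) = (p : ℚ_[p]) ^ (-j) • sphere 0 1 := by
    rw [smul_sphere_zero hpow, norm_p_zpow, neg_neg, mul_one]
  rw [hsphere, addHaar_smul_set μ hpow, ← ofReal_norm, norm_p_zpow, neg_neg]

lemma map_inv_withDensity_apply_of_preimage_eq_smul {a : ℚ_[p]} (ha : a ≠ 0) {s : Set ℚ_[p]}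
    (hs : MeasurableSet s) (hsub : s ⊆ sphere 0 ‖a‖) (hinv : Inv.inv ⁻¹' s = a⁻¹ ^ 2 • s) :
    (μ.withDensity fun w => ((‖w‖₊ ^ 2)⁻¹ : ℝ≥0)).map Inv.inv s = μ s := by
  have ha2 : a⁻¹ ^ 2 ≠ 0 := by simpa using ha
  have hs' : MeasurableSet (a⁻¹ ^ 2 • s) := hs.const_smul_of_ne_zero ha2
  have hdens : ∀ w ∈ a⁻¹ ^ 2 • s, ((‖w‖₊ ^ 2)⁻¹ : ℝ≥0) = ‖a‖₊ ^ 2 := by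
    rintro _ ⟨v, hv, rfl⟩
    have hv : ‖v‖₊ = ‖a‖₊ := by simpa [← coe_nnnorm] using hsub hv
    have ha' : ‖a‖₊ ≠ 0 := nnnorm_ne_zero_iff.mpr ha
    simp only [smul_eq_mul, nnnorm_mul, nnnorm_pow, nnnorm_inv, hv]
    field_simp
  rw [Measure.map_apply measurable_inv hs, hinv, withDensity_apply _ hs',
    setLIntegral_congr_fun hs' fun w hw => by rw [hdens w hw], setLIntegral_const,
    addHaar_smul_set μ ha2, enorm_eq_nnnorm, ← mul_assoc, ← ENNReal.coe_mul, nnnorm_pow,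
    nnnorm_inv, inv_pow, mul_inv_cancel₀ (by simpa using ha), ENNReal.coe_one, one_mul]

/-- A ball `closedBall c r` missing `0` lies in the sphere of radius `‖c‖` and is pulled back by
inversion to `c⁻¹ ^ 2 • closedBall c r`; a ball around `0` is `{0}` and countably many spheres. -/
theorem map_inv_withDensity : (μ.withDensity fun w => ((‖w‖₊ ^ 2)⁻¹ : ℝ≥0)).map Inv.inv = μ := by
  refine (ext_of_closedBall_zpow (fun c m => measure_closedBall_lt_top.ne) fun c m => ?_).symm
  rcases lt_or_ge ((p : ℝ) ^ m) ‖c‖ with hc | hc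
  · exact (map_inv_withDensity_apply_of_preimage_eq_smul μ
      (norm_pos_iff.mp ((zpow_pos prime_pos m).trans hc)) measurableSet_closedBall
      (closedBall_subset_sphere_zero_norm hc) (inv_preimage_closedBall hc)).symm
  rw [IsUltrametricDist.closedBall_eq_of_mem (y := 0) (by simpa using hc),
    measure_closedBall_zero_zpow, measure_closedBall_zero_zpow]
  congr 1
  · have h0 : Inv.inv ⁻¹' {(0 : ℚ_[p])} = {0} := by ext; simp
    rw [Measure.map_apply measurable_inv (measurableSet_singleton 0), h0, measure_singleton,
      withDensity_absolutelyContinuous μ _ (measure_singleton 0)]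
  · refine tsum_congr fun n => ?_
    have hpow : (p : ℚ_[p]) ^ (n - m) ≠ 0 := zpow_ne_zero _ natCast_prime_ne_zero
    rw [show (p : ℝ) ^ (m - n) = ‖(p : ℚ_[p]) ^ ((n : ℤ) - m)‖ by rw [norm_p_zpow]; ring_nf]
    exact (map_inv_withDensity_apply_of_preimage_eq_smul μ hpow isClosed_sphere.measurableSet
      subset_rfl (inv_preimage_sphere_zero_norm hpow)).symm

lemma integrableOn_norm_rpow_closedBall_one {β : ℝ} (hβ : -1 < β) :
    IntegrableOn (fun t : ℚ_[p] => ‖t‖ ^ β) (closedBall 0 1) μ := by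
  set r : ℝ := (p : ℝ) ^ (-(β + 1))
  have hr : r < 1 := Real.rpow_lt_one_of_one_lt_of_neg one_lt_prime (by linarith)
  have hsphere (n : ℕ) : ∫⁻ t in sphere 0 ((p : ℝ) ^ ((0 : ℤ) - n)), ‖‖t‖ ^ β‖ₑ ∂μ =
      ENNReal.ofReal r ^ n * μ (sphere 0 1) := by
    rw [setLIntegral_congr_fun isClosed_sphere.measurableSet fun t ht => by
      rw [mem_sphere_zero_iff_norm.mp ht], setLIntegral_const, addHaar_sphere_zpow, ← mul_assoc,
      ← ofReal_norm, ← ENNReal.ofReal_mul (norm_nonneg _), ← ENNReal.ofReal_pow (by positivity)]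
    congr 2
    rw [zero_sub, Real.norm_of_nonneg (by positivity), ← Real.rpow_intCast,
      ← Real.rpow_mul prime_pos.le, ← Real.rpow_add prime_pos, ← Real.rpow_natCast,
      ← Real.rpow_mul prime_pos.le]
    push_cast
    ring_nf
  refine ⟨(measurable_norm.pow_const β).aestronglyMeasurable, ?_⟩
  rw [HasFiniteIntegral, ← zpow_zero (p : ℝ), closedBall_zero_zpow_eq_union]
  refine (lintegral_union_le _ _ _).trans_lt (ENNReal.add_lt_top.mpr ⟨by simp, ?_⟩)
  refine (lintegral_iUnion_le _ _).trans_lt ?_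
  simp_rw [hsphere, ENNReal.tsum_mul_right, ENNReal.tsum_geometric]
  exact ENNReal.mul_lt_top (ENNReal.inv_lt_top.mpr (tsub_pos_of_lt (ENNReal.ofReal_lt_one.mpr hr)))
    (isCompact_sphere 0 1).measure_lt_top

variable {E : Type*} [NormedAddCommGroup E]

lemma integrable_comp_mul_left_iff {a : ℚ_[p]} (ha : a ≠ 0) {f : ℚ_[p] → E} :
    Integrable (fun y => f (a * y)) μ ↔ Integrable f μ := by
  rw [← Function.comp_def, ← (measurableEmbedding_mulLeft₀ ha).integrable_map_iff,
    map_mul_left_eq_smul μ ha]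
  exact integrable_smul_measure (by simp) (by simpa using ha)

variable [NormedSpace ℝ E]

lemma integral_comp_mul_left {a : ℚ_[p]} (ha : a ≠ 0) (f : ℚ_[p] → E) :
    ∫ y, f (a * y) ∂μ = ‖a‖⁻¹ • ∫ y, f y ∂μ := by
  rw [← (measurableEmbedding_mulLeft₀ ha).integral_map, map_mul_left_eq_smul μ ha,
    integral_smul_measure, ENNReal.toReal_inv, toReal_enorm]

lemma integral_comp_inv (f : ℚ_[p] → E) : ∫ w, (‖w‖ ^ 2)⁻¹ • f w⁻¹ ∂μ = ∫ y, f y ∂μ := by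
  conv_rhs => rw [← map_inv_withDensity μ]
  rw [measurableEmbedding_inv.integral_map, integral_withDensity_eq_integral_smul (by fun_prop)]
  simp [NNReal.smul_def]

lemma integrable_comp_inv_iff {f : ℚ_[p] → E} :
    Integrable (fun w => (‖w‖ ^ 2)⁻¹ • f w⁻¹) μ ↔ Integrable f μ := by
  conv_rhs => rw [← map_inv_withDensity μ]
  rw [measurableEmbedding_inv.integrable_map_iff,
    integrable_withDensity_iff_integrable_smul (by fun_prop)]
  simp [NNReal.smul_def]

lemma integrable_indicator_ball_norm_rpow_sub_one {α : ℝ} (hα : 0 < α) :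
    Integrable ((ball (0 : ℚ_[p]) 1).indicator fun s => ‖s‖ ^ (α - 1) - 1) μ := by
  rw [integrable_indicator_iff measurableSet_ball]
  exact ((integrableOn_norm_rpow_closedBall_one μ (by linarith)).mono_set
    ball_subset_closedBall).sub (integrableOn_const measure_ball_lt_top.ne)

lemma kelvinCorrection_ae_eq {α : ℝ} :
    kelvinCorrection p α =ᵐ[μ] fun t => (ball 0 1).indicator (fun s => ‖s‖ ^ (α - 1) - 1) t -
      (‖t‖ ^ 2)⁻¹ • (ball 0 1).indicator (fun s => ‖s‖ ^ (α - 1) - 1) t⁻¹ :=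
  (μ.ae_ne 0).mono fun _ ht => kelvinCorrection_eq ht

lemma integrable_kelvinCorrection {α : ℝ} (hα : 0 < α) : Integrable (kelvinCorrection p α) μ :=
  (Integrable.sub (integrable_indicator_ball_norm_rpow_sub_one μ hα)
    ((integrable_comp_inv_iff μ).mpr (integrable_indicator_ball_norm_rpow_sub_one μ hα))).congr
    (kelvinCorrection_ae_eq μ).symm

lemma integral_kelvinCorrection {α : ℝ} (hα : 0 < α) : ∫ t, kelvinCorrection p α t ∂μ = 0 := by
  rw [integral_congr_ae (kelvinCorrection_ae_eq μ), integral_sub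
    (integrable_indicator_ball_norm_rpow_sub_one μ hα)
    ((integrable_comp_inv_iff μ).mpr (integrable_indicator_ball_norm_rpow_sub_one μ hα)),
    integral_comp_inv, sub_self]

theorem integral_kelvin_comp_inv [CompleteSpace E] {α : ℝ} (hα : 0 < α) {u Ku : ℚ_[p] → E}
    (hKu : ∀ y ≠ 0, Ku y = ‖y‖ ^ (α - 1) • u y⁻¹) {z : ℚ_[p]} (hz : z ≠ 0) :
    ∫ y, (‖z⁻¹ - y‖ ^ (α + 1))⁻¹ • (Ku z⁻¹ - Ku y) ∂μ =
      ‖z‖ ^ (α + 1) • ∫ w, (‖z - w‖ ^ (α + 1))⁻¹ • (u z - u w) ∂μ := by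
  have hcorr : Integrable (fun w => kelvinCorrection p α (z⁻¹ * w) • u z) μ :=
    ((integrable_comp_mul_left_iff μ (inv_ne_zero hz)).mpr
      (integrable_kelvinCorrection μ hα)).smul_const _
  have hcorr0 : ∫ w, kelvinCorrection p α (z⁻¹ * w) • u z ∂μ = 0 := by
    rw [integral_smul_const, integral_comp_mul_left μ (inv_ne_zero hz),
      integral_kelvinCorrection μ hα, smul_zero, zero_smul]
  calc ∫ y, (‖z⁻¹ - y‖ ^ (α + 1))⁻¹ • (Ku z⁻¹ - Ku y) ∂μ
      = ∫ w, (‖w‖ ^ 2)⁻¹ • (‖z⁻¹ - w⁻¹‖ ^ (α + 1))⁻¹ • (Ku z⁻¹ - Ku w⁻¹) ∂μ :=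
        (integral_comp_inv μ _).symm
    _ = ∫ w, ‖z‖ ^ (α + 1) • (‖z - w‖ ^ (α + 1))⁻¹ • (u z - u w) +
          kelvinCorrection p α (z⁻¹ * w) • u z ∂μ :=
        integral_congr_ae <| (μ.ae_ne 0).mono fun w hw => kelvin_integrand_comp_inv hKu hz hw
    _ = ‖z‖ ^ (α + 1) • ∫ w, (‖z - w‖ ^ (α + 1))⁻¹ • (u z - u w) ∂μ := by
        rw [integral_add_eq_left_of_integral_eq_zero hcorr hcorr0, integral_smul]

end Measure

end Padic

open Padic in
theorem padic_kelvin_preserves_alpha_harmonicity_general {p : ℕ} [Fact p.Prime]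
    [MeasurableSpace ℚ_[p]] [BorelSpace ℚ_[p]]
    (μ : Measure ℚ_[p]) [μ.IsAddHaarMeasure]
    (α : ℝ) (hα : 0 < α)
    (u : ℚ_[p] → ℂ)
    (G : Set ℚ_[p]) (hG0 : (0 : ℚ_[p]) ∉ G)
    (hharm : ∀ x ∈ G,
      ((1 - (p : ℝ) ^ α) / (1 - (p : ℝ) ^ (-α - 1))) •
        ∫ y, ((‖x - y‖ ^ (α + 1) : ℝ))⁻¹ • (u x - u y) ∂μ = 0)
    (Ku : ℚ_[p] → ℂ)
    (hKu : ∀ y : ℚ_[p], y ≠ 0 → Ku y = (‖y‖ ^ (α - 1) : ℝ) • u y⁻¹) :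
    ∀ x ∈ (fun z : ℚ_[p] => z⁻¹) '' G,
      ((1 - (p : ℝ) ^ α) / (1 - (p : ℝ) ^ (-α - 1))) •
        ∫ y, ((‖x - y‖ ^ (α + 1) : ℝ))⁻¹ • (Ku x - Ku y) ∂μ = 0 := by
  rintro _ ⟨z, hzG, rfl⟩
  rw [integral_kelvin_comp_inv μ hα hKu (ne_of_mem_of_not_mem hzG hG0), smul_comm, hharm z hzG,
    smul_zero]

/-- The Kelvin transform preserves `α`-harmonicity: let `u` be sufficiently
regular on `ℚ_p` (locally constant with compact support and zero mean) and
`α`-harmonic on an open set `G ⊆ ℚ_p \ {0}`, i.e. `(D^α u)(x) = 0` on `G`, where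
`(D^α u)(x) = ((1 - p^α)/(1 - p^{-α-1})) ∫ (u(x) - u(y))/|x-y|^{α+1} dy`.
Then the Kelvin transform `(Ku)(x) = |x|^(α-1) u(1/x)` (extended by `0` at `0`)
is `α`-harmonic on the inverted set `G* = {1/x : x ∈ G}`. -/
theorem padic_kelvin_preserves_alpha_harmonicity {p : ℕ} [Fact p.Prime]
    [MeasurableSpace ℚ_[p]] [BorelSpace ℚ_[p]]
    (μ : Measure ℚ_[p]) [μ.IsAddHaarMeasure]
    (hμ : μ (Metric.closedBall (0 : ℚ_[p]) 1) = 1)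
    (α : ℝ) (hα : 0 < α) (hα1 : α ≠ 1)
    (u : ℚ_[p] → ℂ)
    (hlc : ∃ k : ℤ, ∀ x x' : ℚ_[p], ‖x'‖ ≤ (p : ℝ) ^ (-k) → u (x + x') = u x)
    (hcs : HasCompactSupport u)
    (hmean : ∫ x, u x ∂μ = 0)
    (G : Set ℚ_[p]) (hGopen : IsOpen G) (hG0 : (0 : ℚ_[p]) ∉ G)
    (hharm : ∀ x ∈ G,
      ((1 - (p : ℝ) ^ α) / (1 - (p : ℝ) ^ (-α - 1))) •
        ∫ y, ((‖x - y‖ ^ (α + 1) : ℝ))⁻¹ • (u x - u y) ∂μ = 0)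
    (Ku : ℚ_[p] → ℂ)
    (hKu0 : Ku 0 = 0)
    (hKu : ∀ y : ℚ_[p], y ≠ 0 → Ku y = (‖y‖ ^ (α - 1) : ℝ) • u y⁻¹) :
    ∀ x ∈ (fun z : ℚ_[p] => z⁻¹) '' G,
      ((1 - (p : ℝ) ^ α) / (1 - (p : ℝ) ^ (-α - 1))) •
        ∫ y, ((‖x - y‖ ^ (α + 1) : ℝ))⁻¹ • (Ku x - Ku y) ∂μ = 0 :=
  padic_kelvin_preserves_alpha_harmonicity_general μ α hα u G hG0 hharm Ku hKu
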